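/- arXiv:1502.03788 — 3 statements merged into one kernel-verified Lean document; each statement's English description precedes it below -/
import Mathlib

section
/- Extremal Theorem, part 2: let τ ∈ ℂ \ {0}, let b be a finite word over {1,…,n} and x a nonempty focal word such that M(τ) ⊆ T_b(T_x(F)). Then M(τ) = {T_b(p_x)}; that is, the point T_b(p_x) is the unique maximizer of the target function of τ over F. -/
open Complex

noncomputable section

/-- Composition of IFS maps along a finite word: `T_a = T_{a₁} ∘ ⋯ ∘ T_{a_L}`. -/
def wordMap {n : ℕ} (T : Fin n → ℂ → ℂ) : List (Fin n) → ℂ → ℂ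
  | [] => id
  | k :: a => T k ∘ wordMap T a

/-- Product of factors along a finite word: `φ_a = φ_{a₁} ⋯ φ_{a_L}`. -/
def wordFactor {n : ℕ} (φ : Fin n → ℂ) (a : List (Fin n)) : ℂ :=
  (a.map φ).prod

/-- `e` is an extremal point of `S`: it belongs to `S` and does not lie in the open
segment between any two distinct points of `S`. -/
def IsExtremal (S : Set ℂ) (e : ℂ) : Prop :=
  e ∈ S ∧ ¬ ∃ s₁ s₂ : ℂ, s₁ ∈ S ∧ s₂ ∈ S ∧ s₁ ≠ s₂ ∧
    ∃ t : ℝ, 0 < t ∧ t < 1 ∧ e = t • s₁ + (1 - t) • s₂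

/-- The set of maximizers of the target function `z ↦ ⟨τ,z⟩ = Re(conj τ · z)` over `F`. -/
def maxSet (F : Set ℂ) (τ : ℂ) : Set ℂ :=
  {z | z ∈ F ∧ ∀ w ∈ F, ((starRingEnd ℂ) τ * w).re ≤ ((starRingEnd ℂ) τ * z).re}

/-!
Write `q = T_b(p_x)` and `φ_x = r ∈ (0,1)`. Every maximizer `y = T_b(T_x w)` satisfies
`y - q = r (T_b w - q)`; comparing target values of `y`, `q` and `T_b w` (all in `F`, as `p_x ∈ F`
by Banach's fixed point theorem) shows that `T_b w` is again a maximizer. Iterating, every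
maximizer lies within `r^k · diam F` of `q` for every `k`, so the nonempty set of maximizers
is `{q}`.
-/

open Set Filter Topology Function

section WordMaps

variable {n : ℕ} {p φ : Fin n → ℂ} {T : Fin n → ℂ → ℂ}

@[simp]
lemma wordFactor_cons (φ : Fin n → ℂ) (k : Fin n) (a : List (Fin n)) :
    wordFactor φ (k :: a) = φ k * wordFactor φ a := by
  simp [wordFactor]

lemma norm_wordFactor_le_one (hφ : ∀ k, ‖φ k‖ < 1) (a : List (Fin n)) :
    ‖wordFactor φ a‖ ≤ 1 := by
  induction a with
  | nil => simp [wordFactor]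
  | cons k a ih =>
    rw [wordFactor_cons, norm_mul]
    exact mul_le_one₀ (hφ k).le (norm_nonneg _) ih

lemma norm_wordFactor_lt_one (hφ : ∀ k, ‖φ k‖ < 1) {a : List (Fin n)} (ha : a ≠ []) :
    ‖wordFactor φ a‖ < 1 := by
  obtain ⟨k, a, rfl⟩ := List.exists_cons_of_ne_nil ha
  rw [wordFactor_cons, norm_mul]
  exact mul_lt_one_of_nonneg_of_lt_one_left (norm_nonneg _) (hφ k) (norm_wordFactor_le_one hφ a)

lemma wordMap_sub_wordMap (hT : ∀ k z, T k z = p k + φ k * (z - p k)) (a : List (Fin n))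
    (z w : ℂ) : wordMap T a z - wordMap T a w = wordFactor φ a * (z - w) := by
  induction a with
  | nil => simp [wordMap, wordFactor]
  | cons k a ih =>
    simp only [wordMap, Function.comp_apply, hT, wordFactor_cons]
    linear_combination φ k * ih

lemma mapsTo_wordMap {F : Set ℂ} (hF : ∀ k, MapsTo (T k) F F) (a : List (Fin n)) :
    MapsTo (wordMap T a) F F := by
  induction a with
  | nil => exact mapsTo_id F
  | cons k a ih => exact (hF k).comp ih

lemma contractingWith_wordMap (hT : ∀ k z, T k z = p k + φ k * (z - p k))
    (hφ : ∀ k, ‖φ k‖ < 1) {a : List (Fin n)} (ha : a ≠ []) :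
    ContractingWith ‖wordFactor φ a‖₊ (wordMap T a) := by
  refine ⟨norm_wordFactor_lt_one hφ ha, LipschitzWith.of_dist_le_mul fun z w => ?_⟩
  rw [dist_eq_norm, dist_eq_norm, wordMap_sub_wordMap hT, norm_mul, coe_nnnorm]

lemma wordMap_wordMap_sub_of_isFixedPt (hT : ∀ k z, T k z = p k + φ k * (z - p k))
    {b x : List (Fin n)} {q : ℂ} (hq : wordMap T x q = q) (w : ℂ) :
    wordMap T b (wordMap T x w) - wordMap T b q =
      wordFactor φ x * (wordMap T b w - wordMap T b q) := by
  rw [wordMap_sub_wordMap hT, ← hq, wordMap_sub_wordMap hT x, hq, wordMap_sub_wordMap hT b]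
  ring

end WordMaps

lemma ContractingWith.mem_of_isFixedPt {α : Type*} [MetricSpace α] [CompleteSpace α]
    {K : NNReal} {f : α → α} (hf : ContractingWith K f) {F : Set α} (hFc : IsClosed F)
    (hFne : F.Nonempty) (hfF : MapsTo f F F) {x : α} (hx : IsFixedPt f x) : x ∈ F := by
  obtain ⟨y, hy⟩ := hFne
  have : Nonempty α := ⟨y⟩
  rw [hf.fixedPoint_unique hx]
  exact hFc.mem_of_tendsto (hf.tendsto_iterate_fixedPoint y)
    (Eventually.of_forall fun k => hfF.iterate k hy)

lemma maxSet_nonempty {F : Set ℂ} (hFc : IsCompact F) (hFne : F.Nonempty) (τ : ℂ) :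
    (maxSet F τ).Nonempty := by
  have hcont : Continuous fun z : ℂ => ((starRingEnd ℂ) τ * z).re := by fun_prop
  obtain ⟨z, hzF, hz⟩ := hFc.exists_isMaxOn hFne hcont.continuousOn
  exact ⟨z, hzF, fun w hw => hz hw⟩

/-- `⟨τ,y⟩ - ⟨τ,q⟩ = r (⟨τ,y'⟩ - ⟨τ,q⟩) ≤ r (⟨τ,y⟩ - ⟨τ,q⟩)` forces both sides
to vanish. -/
lemma mem_maxSet_of_sub_eq_smul {F : Set ℂ} {τ y q y' : ℂ} {r : ℝ} (hr0 : 0 < r)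
    (hr1 : r < 1) (hy : y ∈ maxSet F τ) (hq : q ∈ F) (hy' : y' ∈ F)
    (h : y - q = r • (y' - q)) :
    y' ∈ maxSet F τ := by
  have hre : ((starRingEnd ℂ) τ * y).re - ((starRingEnd ℂ) τ * q).re
      = r * (((starRingEnd ℂ) τ * y').re - ((starRingEnd ℂ) τ * q).re) := by
    rw [← sub_re, ← mul_sub, h, ← sub_re, ← mul_sub, Complex.real_smul, mul_left_comm,
      re_ofReal_mul]
  have hqy := hy.2 q hq
  have hy'y := hy.2 y' hy'
  refine ⟨hy', fun w hw => (hy.2 w hw).trans ?_⟩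
  nlinarith

lemma eq_of_forall_exists_sub_eq_smul {E : Type*} [NormedAddCommGroup E] [NormedSpace ℝ E]
    {S : Set E} (hS : Bornology.IsBounded S) {q : E} {r : ℝ} (hr0 : 0 ≤ r) (hr1 : r < 1)
    (h : ∀ y ∈ S, ∃ y' ∈ S, y - q = r • (y' - q)) {y : E} (hy : y ∈ S) : y = q := by
  obtain ⟨C, hC⟩ := (hS.vadd (-q)).exists_norm_le
  have hbound : ∀ k : ℕ, ∀ y ∈ S, ‖y - q‖ ≤ r ^ k * C := by
    intro k
    induction k with
    | zero => intro y hy; simpa [sub_eq_neg_add] using hC _ ⟨y, hy, rfl⟩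
    | succ k ih =>
      intro y hy
      obtain ⟨y', hy', hyy'⟩ := h y hy
      rw [hyy', norm_smul, Real.norm_of_nonneg hr0, pow_succ', mul_assoc]
      exact mul_le_mul_of_nonneg_left (ih y' hy') hr0
  have htend : Tendsto (fun k : ℕ => r ^ k * C) atTop (𝓝 0) := by
    simpa using (tendsto_pow_atTop_nhds_zero_of_lt_one hr0 hr1).mul_const C
  exact sub_eq_zero.1 <| norm_le_zero_iff.1 <| ge_of_tendsto' htend fun k => hbound k y hy

theorem extremal_theorem_part2_general {n : ℕ} (p φ : Fin n → ℂ)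
    (hφ : ∀ k, 0 < ‖φ k‖ ∧ ‖φ k‖ < 1)
    (T : Fin n → ℂ → ℂ) (hT : ∀ k z, T k z = p k + φ k * (z - p k))
    (F : Set ℂ) (hFne : F.Nonempty) (hFc : IsCompact F)
    (hFinv : F = ⋃ k, T k '' F)
    (τ : ℂ)
    (b x : List (Fin n)) (hx : x ≠ [])
    (hfoc : ∃ r : ℝ, 0 < r ∧ wordFactor φ x = (r : ℂ))
    (px : ℂ) (hpx : wordMap T x px = px)
    (hMbx : maxSet F τ ⊆ wordMap T b '' (wordMap T x '' F)) :
    maxSet F τ = {wordMap T b px} := by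
  obtain ⟨r, hr0, hrx⟩ := hfoc
  have hφ1 : ∀ k, ‖φ k‖ < 1 := fun k => (hφ k).2
  have hF : ∀ k, MapsTo (T k) F F := fun k z hz => hFinv ▸ mem_iUnion.2 ⟨k, z, hz, rfl⟩
  have hr1 : r < 1 := by
    simpa [hrx, abs_of_pos hr0] using norm_wordFactor_lt_one hφ1 hx
  have hpxF : px ∈ F := (contractingWith_wordMap hT hφ1 hx).mem_of_isFixedPt hFc.isClosed hFne
    (mapsTo_wordMap hF x) hpx
  set q := wordMap T b px
  have hqF : q ∈ F := mapsTo_wordMap hF b hpxF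
  have hrescale : ∀ y ∈ maxSet F τ, ∃ y' ∈ maxSet F τ, y - q = r • (y' - q) := by
    intro y hy
    obtain ⟨_, ⟨w, hw, rfl⟩, rfl⟩ := hMbx hy
    have hsub : wordMap T b (wordMap T x w) - q = r • (wordMap T b w - q) := by
      rw [Complex.real_smul, ← hrx]
      exact wordMap_wordMap_sub_of_isFixedPt hT hpx w
    exact ⟨_, mem_maxSet_of_sub_eq_smul hr0 hr1 hy hqF (mapsTo_wordMap hF b hw) hsub, hsub⟩
  have hM : ∀ y ∈ maxSet F τ, y = q := fun y hy =>
    eq_of_forall_exists_sub_eq_smul (hFc.isBounded.subset fun z hz => hz.1) hr0.le hr1 hrescale hy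
  obtain ⟨z, hz⟩ := maxSet_nonempty hFc hFne τ
  exact eq_singleton_iff_unique_mem.2 ⟨hM z hz ▸ hz, hM⟩

/-- Extremal Theorem, part 2: if `M(τ) ⊆ T_b(T_x(F))` with `x` a nonempty
focal word, then `M(τ) = {T_b(p_x)}`. -/
theorem extremal_theorem_part2 {n : ℕ} (hn : 1 ≤ n) (p φ : Fin n → ℂ)
    (hφ : ∀ k, 0 < ‖φ k‖ ∧ ‖φ k‖ < 1)
    (T : Fin n → ℂ → ℂ) (hT : ∀ k z, T k z = p k + φ k * (z - p k))
    (F : Set ℂ) (hFne : F.Nonempty) (hFc : IsCompact F)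
    (hFinv : F = ⋃ k, T k '' F)
    (τ : ℂ) (hτ : τ ≠ 0)
    (b x : List (Fin n)) (hx : x ≠ [])
    (hfoc : ∃ r : ℝ, 0 < r ∧ wordFactor φ x = (r : ℂ))
    (px : ℂ) (hpx : wordMap T x px = px)
    (hMbx : maxSet F τ ⊆ wordMap T b '' (wordMap T x '' F)) :
    maxSet F τ = {wordMap T b px} :=
  extremal_theorem_part2_general p φ hφ T hT F hFne hFc hFinv τ b x hx hfoc px hpx hMbx
end
end

section
/- Continuity in Angular Parameters: fix fixed points p_1,…,p_n ∈ ℂ and moduli λ_1,…,λ_n ∈ (0,1); for θ = (θ_1,…,θ_n) ∈ (−π,π]^n let T_k[θ](z) := p_k + λ_k e^{iθ_k}(z − p_k), let F[θ] be the attractor of the IFS (T_1[θ],…,T_n[θ]), and for a finite word a over {1,…,n} let T_a[θ] denote the corresponding composition. Fix a seed p ∈ {p_1,…,p_n}, fix θ ∈ (−π,π]^n, and fix D > diam(F[θ]). Then for every ε > 0 there exists δ > 0 such that for every θ' ∈ (−π,π]^n with diam(F[θ']) < D and max_{1≤k≤n} |θ_k − θ'_k| < δ, one has sup_a |T_a[θ](p)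 − T_a[θ'](p)| < ε, the supremum being over all finite words a over {1,…,n}. -/
/-!
Each map is a similarity `z ↦ p_k + φ_k (z - p_k)`, and two such maps with the same centre
satisfy `|T_k x - T'_k y| ≤ |φ_k| |x - y| + |φ_k - φ'_k| |y - p_k|`. Along a word, the images
`y = T'_a(p)` and the centres `p_k` all lie in the attractor `F[θ']` (the centres because
`F[θ']` is closed and invariant under the contraction `T'_k`), so `|y - p_k| ≤ diam F[θ'] < D`.
With `Λ = max λ_k` and `|φ_k - φ'_k| ≤ λ_k |θ_k - θ'_k| ≤ δ` the errors sum to a geometric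
series, giving `sup_a |T_a(p) - T'_a(p)| ≤ δ D / (1 - Λ)`.
-/

open Complex

noncomputable section

open Function Set

lemma norm_exp_mul_I_sub_exp_mul_I_le (s t : ℝ) :
    ‖exp (s * I) - exp (t * I)‖ ≤ |s - t| := by
  have hfactor : exp (s * I) - exp (t * I) = exp (t * I) * (exp (I * ↑(s - t)) - 1) := by
    rw [mul_sub, ← Complex.exp_add]; push_cast; ring_nf
  rw [hfactor, norm_mul, norm_exp_ofReal_mul_I, one_mul]
  exact Real.norm_exp_I_mul_ofReal_sub_one_le

lemma norm_ofReal_mul_exp_sub_ofReal_mul_exp_le {r : ℝ} (hr₀ : 0 ≤ r) (hr₁ : r ≤ 1) (s t : ℝ) :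
    ‖r * exp (s * I) - r * exp (t * I)‖ ≤ |s - t| :=
  calc ‖r * exp (s * I) - r * exp (t * I)‖ = r * ‖exp (s * I) - exp (t * I)‖ := by
        rw [← mul_sub, norm_mul, norm_real, Real.norm_of_nonneg hr₀]
    _ ≤ 1 * |s - t| := by gcongr; exact norm_exp_mul_I_sub_exp_mul_I_le s t
    _ = |s - t| := one_mul _

lemma IsClosed.mem_of_mapsTo_of_isFixedPt {X : Type*} [MetricSpace X] [CompleteSpace X]
    {K : NNReal} {f : X → X} (hf : ContractingWith K f) {s : Set X} (hs : IsClosed s)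
    (hne : s.Nonempty) (hmaps : MapsTo f s s) {x : X} (hx : IsFixedPt f x) : x ∈ s := by
  obtain ⟨y, hy⟩ := hne
  have : Nonempty X := ⟨y⟩
  rw [hf.fixedPoint_unique hx]
  exact hs.mem_of_tendsto (hf.tendsto_iterate_fixedPoint y)
    (Filter.Eventually.of_forall fun m => hmaps.iterate m hy)

def similarity (c φ : ℂ) (z : ℂ) : ℂ := c + φ * (z - c)

lemma dist_similarity_similarity (c φ φ' x y : ℂ) :
    dist (similarity c φ x) (similarity c φ' y) ≤ ‖φ‖ * dist x y + ‖φ - φ'‖ * dist y c := by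
  have hsplit : similarity c φ x - similarity c φ' y = φ * (x - y) + (φ - φ') * (y - c) := by
    simp only [similarity]; ring
  rw [dist_eq_norm, hsplit, dist_eq_norm, dist_eq_norm]
  exact (norm_add_le _ _).trans (by rw [norm_mul, norm_mul])

lemma contractingWith_similarity (c φ : ℂ) (hφ : ‖φ‖ < 1) :
    ContractingWith ‖φ‖₊ (similarity c φ) := by
  refine ⟨hφ, LipschitzWith.of_dist_le_mul fun x y => ?_⟩
  simpa using dist_similarity_similarity c φ φ x y

lemma isFixedPt_similarity (c φ : ℂ) : IsFixedPt (similarity c φ) c := by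
  simp [IsFixedPt, similarity]

lemma wordMap_mapsTo {n : ℕ} {T : Fin n → ℂ → ℂ} {s : Set ℂ} (hT : ∀ k, MapsTo (T k) s s)
    (a : List (Fin n)) : MapsTo (wordMap T a) s s := by
  induction a with
  | nil => exact mapsTo_id s
  | cons k a ih => exact (hT k).comp ih

lemma dist_wordMap_similarity_le {n : ℕ} {c φ φ' : Fin n → ℂ} {s : Set ℂ} {Λ η : ℝ}
    (hΛ : Λ < 1) (hφ : ∀ k, ‖φ k‖ ≤ Λ) (hη₀ : 0 ≤ η) (hη : ∀ k, ‖φ k - φ' k‖ ≤ η)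
    (hs : Bornology.IsBounded s) (hc : ∀ k, c k ∈ s)
    (hmaps : ∀ k, MapsTo (similarity (c k) (φ' k)) s s) {q : ℂ} (hq : q ∈ s)
    (a : List (Fin n)) :
    dist (wordMap (fun k => similarity (c k) (φ k)) a q)
      (wordMap (fun k => similarity (c k) (φ' k)) a q) ≤ η * Metric.diam s / (1 - Λ) := by
  have h1Λ : 0 < 1 - Λ := by linarith
  induction a with
  | nil => simp only [wordMap, id, dist_self]; positivity
  | cons k a ih =>
    set y := wordMap (fun k => similarity (c k) (φ' k)) a q
    have hy : dist y (c k) ≤ Metric.diam s :=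
      Metric.dist_le_diam_of_mem hs (wordMap_mapsTo hmaps a hq) (hc k)
    have hΛ₀ : 0 ≤ Λ := (norm_nonneg _).trans (hφ k)
    calc _ ≤ ‖φ k‖ * dist (wordMap (fun k => similarity (c k) (φ k)) a q) y
            + ‖φ k - φ' k‖ * dist y (c k) := dist_similarity_similarity _ _ _ _ _
      _ ≤ Λ * (η * Metric.diam s / (1 - Λ)) + η * Metric.diam s := by
          gcongr
          · exact hφ k
          · exact hη k
      _ = η * Metric.diam s / (1 - Λ) := by field_simp; ring

lemma mapsTo_of_eq_iUnion_image {X ι : Type*} {T : ι → X → X} {F : Set X}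
    (hF : F = ⋃ k, T k '' F) (k : ι) : MapsTo (T k) F F := by
  intro x hx
  rw [hF]
  exact mem_iUnion_of_mem k (mem_image_of_mem _ hx)

lemma center_mem_of_eq_iUnion_image_similarity {ι : Type*} {c φ : ι → ℂ} {F : Set ℂ}
    (hφ : ∀ k, ‖φ k‖ < 1) (hne : F.Nonempty) (hF : IsClosed F)
    (hinv : F = ⋃ k, similarity (c k) (φ k) '' F) (k : ι) : c k ∈ F :=
  hF.mem_of_mapsTo_of_isFixedPt (contractingWith_similarity _ _ (hφ k)) hne
    (mapsTo_of_eq_iUnion_image hinv k) (isFixedPt_similarity _ _)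

theorem continuity_in_angular_parameters_general {n : ℕ}
    (p : Fin n → ℂ) (lam : Fin n → ℝ) (hlam : ∀ k, 0 < lam k ∧ lam k < 1)
    (T : (Fin n → ℝ) → Fin n → ℂ → ℂ)
    (hT : ∀ θ k z, T θ k z =
      p k + (lam k : ℂ) * Complex.exp ((θ k : ℂ) * Complex.I) * (z - p k))
    (Fat : (Fin n → ℝ) → Set ℂ)
    (hFat : ∀ θ : Fin n → ℝ,
      (Fat θ).Nonempty ∧ IsCompact (Fat θ) ∧ Fat θ = ⋃ k, T θ k '' Fat θ)
    (k₀ : Fin n) (θ : Fin n → ℝ)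
    (D : ℝ) :
    ∀ ε > 0, ∃ δ > 0, ∀ θ' : Fin n → ℝ,
      (∀ k, θ' k ∈ Set.Ioc (-Real.pi) Real.pi) →
      Metric.diam (Fat θ') < D →
      (∀ k, |θ k - θ' k| < δ) →
      (⨆ a : List (Fin n),
        dist (wordMap (T θ) a (p k₀)) (wordMap (T θ') a (p k₀))) < ε := by
  intro ε hε
  have : Nonempty (Fin n) := ⟨k₀⟩
  obtain ⟨kmax, hkmax⟩ := Finite.exists_max lam
  set φ : (Fin n → ℝ) → Fin n → ℂ := fun θ k => lam k * exp (θ k * I)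
  have hTφ : ∀ θ, T θ = fun k => similarity (p k) (φ θ k) := fun θ => by
    ext k z; rw [hT]; simp only [similarity, φ, mul_assoc]
  have hnorm : ∀ θ k, ‖φ θ k‖ = lam k := fun θ k => by
    simp [φ, norm_exp_ofReal_mul_I, abs_of_pos (hlam k).1]
  have h1Λ : 0 < 1 - lam kmax := by linarith [(hlam kmax).2]
  have hD₁ : 0 < max D 1 := lt_max_of_lt_right one_pos
  refine ⟨(1 - lam kmax) * ε / max D 1, by positivity, fun θ' _ hdiam hclose => ?_⟩
  obtain ⟨hne, hcpt, hinv⟩ := hFat θ'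
  rw [hTφ] at hinv
  have hfix := center_mem_of_eq_iUnion_image_similarity
    (fun k => (hnorm θ' k).trans_lt (hlam k).2) hne hcpt.isClosed hinv
  have hφclose : ∀ k, ‖φ θ k - φ θ' k‖ ≤ (1 - lam kmax) * ε / max D 1 := fun k =>
    (norm_ofReal_mul_exp_sub_ofReal_mul_exp_le (hlam k).1.le (hlam k).2.le _ _).trans
      (hclose k).le
  have hsmall : (1 - lam kmax) * ε / max D 1 * Metric.diam (Fat θ') / (1 - lam kmax) < ε := by
    have hdiam₁ : Metric.diam (Fat θ') < max D 1 := hdiam.trans_le (le_max_left D 1)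
    rw [div_lt_iff₀ h1Λ, div_mul_eq_mul_div, div_lt_iff₀ hD₁]
    nlinarith [mul_pos h1Λ hε]
  rw [hTφ θ, hTφ θ']
  refine (ciSup_le fun a => ?_).trans_lt hsmall
  exact dist_wordMap_similarity_le (hlam kmax).2 (fun k => (hnorm θ k).trans_le (hkmax k))
    (by positivity) hφclose hcpt.isBounded hfix (mapsTo_of_eq_iUnion_image hinv) (hfix k₀) a

/-- Continuity in Angular Parameters: with fixed points and moduli fixed,
the attractor depends continuously on the vector of rotation angles, in the metric
`d_∞(F,F') = sup_a |T_a(p) − T_a'(p)|` over all finite addresses `a`, restricted to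
angle vectors whose attractor has diameter below a fixed bound `D > diam F[θ]`. -/
theorem continuity_in_angular_parameters {n : ℕ} (hn : 1 ≤ n)
    (p : Fin n → ℂ) (lam : Fin n → ℝ) (hlam : ∀ k, 0 < lam k ∧ lam k < 1)
    (T : (Fin n → ℝ) → Fin n → ℂ → ℂ)
    (hT : ∀ θ k z, T θ k z =
      p k + (lam k : ℂ) * Complex.exp ((θ k : ℂ) * Complex.I) * (z - p k))
    (Fat : (Fin n → ℝ) → Set ℂ)
    (hFat : ∀ θ : Fin n → ℝ,
      (Fat θ).Nonempty ∧ IsCompact (Fat θ) ∧ Fat θ = ⋃ k, T θ k '' Fat θ)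
    (k₀ : Fin n) (θ : Fin n → ℝ) (hθ : ∀ k, θ k ∈ Set.Ioc (-Real.pi) Real.pi)
    (D : ℝ) (hD : Metric.diam (Fat θ) < D) :
    ∀ ε > 0, ∃ δ > 0, ∀ θ' : Fin n → ℝ,
      (∀ k, θ' k ∈ Set.Ioc (-Real.pi) Real.pi) →
      Metric.diam (Fat θ') < D →
      (∀ k, |θ k - θ' k| < δ) →
      (⨆ a : List (Fin n),
        dist (wordMap (T θ) a (p k₀)) (wordMap (T θ') a (p k₀))) < ε :=
  continuity_in_angular_parameters_general p lam hlam T hT Fat hFat k₀ θ D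
end
end

section
/- Equiangular fractals of unity: suppose all rotation angles are equal and rational multiples of 2π, i.e. φ_k = |φ_k|·e^{2πiN/M} for every k = 1,…,n, with integers M ≥ 1 and 0 ≤ N < M; set M' := M / gcd(N,M). Then the attractor F equals the attractor of the IFS {T_x : x a word of length M' over {1,…,n}}, each of whose factors φ_x is a positive real (so this is a Sierpiński IFS), and conv(F) = conv({p_x : x a word of length M'}); in particular every extremal point of F is the fixed point p_x of some composition T_x with |x| = M'. -/
open Complex

noncomputable section

/-! All factors share the rotation `E = exp (2πiN/M)` and `E ^ M' = 1`, so a word `x` of length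
`M'` has factor `φ_x = |φ_x| ∈ (0, 1)`: `T_x` is the homothety of ratio `|φ_x|` about `p_x`, and
`p_x ∈ F` as the fixed point of a contraction preserving `F`. These homotheties map
`C = conv {p_x : |x| = M'}` into itself and `F = ⋃ T_x(F)`; if `T_x(w) ∈ F` is a point farthest
from `C`, its distance to `C` is at most `|φ_x|` times that of `w`, hence zero, and `F ⊆ C`. An
extremal point `T_x(w)` lies on the segment from `w` to `p_x`, so it equals `p_x`. -/

open Set Metric NNReal Function AffineMap

theorem Complex.exp_two_pi_div_mul_I_pow_div_gcd (N M : ℕ) :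
    exp (((2 * Real.pi * N / M : ℝ) : ℂ) * I) ^ (M / N.gcd M) = 1 := by
  rcases M.eq_zero_or_pos with rfl | hM
  · simp
  have hg : (N.gcd M : ℝ) ≠ 0 := by exact_mod_cast (Nat.gcd_pos_of_pos_right N hM).ne'
  have key : ((M / N.gcd M : ℕ) : ℝ) * (2 * Real.pi * N / M) =
      (N / N.gcd M : ℕ) * (2 * Real.pi) := by
    rw [Nat.cast_div (Nat.gcd_dvd_right N M) hg, Nat.cast_div (Nat.gcd_dvd_left N M) hg]
    field_simp
  rw [← exp_nat_mul, ← exp_nat_mul_two_pi_mul_I (N / N.gcd M), ← mul_assoc, ← mul_assoc]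
  exact_mod_cast congr(exp ((($key : ℝ) : ℂ) * I))

theorem ContractingWith.mem_of_isFixedPt_s17 {α : Type*} [MetricSpace α] {K : ℝ≥0} {f : α → α}
    (hf : ContractingWith K f) {s : Set α} (hs : IsComplete s) (hsf : MapsTo f s s)
    (hne : s.Nonempty) {q : α} (hq : IsFixedPt f q) : q ∈ s := by
  obtain ⟨x, hx⟩ := hne
  have hrestr := hf.restrict hsf
  rw [hf.fixedPoint_unique' hq (hrestr.efixedPoint_isFixedPt' hs hsf hx (edist_ne_top _ _))]
  exact hrestr.efixedPoint_mem' hs hsf hx (edist_ne_top _ _)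

theorem LipschitzWith.infDist_le_mul {X : Type*} [PseudoMetricSpace X] {c : ℝ≥0} {f : X → X}
    (hf : LipschitzWith c f) {C : Set X} (hC : C.Nonempty) (hfC : MapsTo f C C) (x : X) :
    infDist (f x) C ≤ c * infDist x C := by
  have : Nonempty C := hC.to_subtype
  rw [infDist_eq_iInf (x := x), Real.mul_iInf_of_nonneg c.coe_nonneg]
  exact le_ciInf fun y => (infDist_le_dist_of_mem (hfC y.2)).trans (hf.dist_le_mul x y)

theorem IsCompact.subset_of_subset_iUnion_image_of_contractingWith {X ι : Type*}
    [MetricSpace X] {K C : Set X} (hK : IsCompact K) (hC : IsClosed C) (hCne : C.Nonempty)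
    {f : ι → X → X} {c : ι → ℝ≥0}
    (hf : ∀ i, ContractingWith (c i) (f i)) (hfC : ∀ i, MapsTo (f i) C C)
    (hKf : K ⊆ ⋃ i, f i '' K) : K ⊆ C := by
  rcases K.eq_empty_or_nonempty with rfl | hKne
  · exact empty_subset C
  obtain ⟨z, hzK, hmax⟩ := hK.exists_isMaxOn hKne (continuous_infDist_pt C).continuousOn
  suffices infDist z C ≤ 0 from fun y hy =>
    (hC.mem_iff_infDist_zero hCne).2 (le_antisymm ((hmax hy).trans this) infDist_nonneg)
  obtain ⟨i, w, hwK, rfl⟩ : ∃ i, ∃ w ∈ K, f i w = z := by simpa using hKf hzK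
  have hlt : (c i : ℝ) < 1 := (hf i).1
  have := ((hf i).2.infDist_le_mul hCne (hfC i) w).trans
    (mul_le_mul_of_nonneg_left (hmax hwK) (c i).2)
  nlinarith [infDist_nonneg (x := f i w) (s := C)]

theorem AffineMap.contractingWith_homothety {𝕜 E : Type*} [NormedField 𝕜] [NormedAddCommGroup E]
    [NormedSpace 𝕜 E] (c : E) {r : 𝕜} (hr : ‖r‖ < 1) :
    ContractingWith ‖r‖₊ (homothety c r) :=
  ⟨mod_cast hr, LipschitzWith.of_dist_le_mul fun x y => by
    simp [homothety_apply, dist_eq_norm, ← smul_sub, norm_smul]⟩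

section Homothety

variable {E ι : Type*} [NormedAddCommGroup E] [NormedSpace ℝ E] {K : Set E} {c : ι → E}
  {r : ι → ℝ}

theorem norm_lt_one_of_mem_Ico {t : ℝ} (ht : t ∈ Ico 0 1) : ‖t‖ < 1 := by
  rw [Real.norm_of_nonneg ht.1]
  exact ht.2

theorem IsCompact.subset_convexHull_of_subset_iUnion_homothety [Finite ι] (hK : IsCompact K)
    (hr : ∀ i, r i ∈ Ico 0 1) (hKc : K ⊆ ⋃ i, homothety (c i) (r i) '' K) :
    K ⊆ convexHull ℝ (range c) := by
  rcases isEmpty_or_nonempty ι with hι | ⟨⟨i₀⟩⟩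
  · simp only [iUnion_of_empty, subset_empty_iff] at hKc
    exact hKc ▸ empty_subset _
  refine hK.subset_of_subset_iUnion_image_of_contractingWith
    ((finite_range c).isClosed_convexHull ℝ)
    ⟨c i₀, subset_convexHull ℝ _ (mem_range_self i₀)⟩
    (fun i => contractingWith_homothety (c i) (norm_lt_one_of_mem_Ico (hr i)))
    (fun i z hz => ?_) hKc
  rw [homothety_eq_lineMap]
  exact (convex_convexHull ℝ _).lineMap_mem (subset_convexHull ℝ _ (mem_range_self i)) hz
    (Ico_subset_Icc_self (hr i))

theorem IsCompact.center_mem_of_eq_iUnion_homothety (hK : IsCompact K) (hKne : K.Nonempty)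
    (hr : ∀ i, r i ∈ Ico 0 1) (hKc : K = ⋃ i, homothety (c i) (r i) '' K) (i : ι) : c i ∈ K :=
  (contractingWith_homothety (c i) (norm_lt_one_of_mem_Ico (hr i))).mem_of_isFixedPt_s17
    hK.isComplete (fun _ hz => hKc ▸ mem_iUnion_of_mem i (mem_image_of_mem _ hz)) hKne
    (homothety_apply_same (c i) (r i))

theorem IsCompact.convexHull_eq_of_eq_iUnion_homothety [Finite ι] (hK : IsCompact K)
    (hKne : K.Nonempty) (hr : ∀ i, r i ∈ Ico 0 1) (hKc : K = ⋃ i, homothety (c i) (r i) '' K) :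
    convexHull ℝ K = convexHull ℝ (range c) :=
  (convexHull_min (hK.subset_convexHull_of_subset_iUnion_homothety hr hKc.subset)
    (convex_convexHull ℝ _)).antisymm
    (convexHull_mono (range_subset_iff.2 (hK.center_mem_of_eq_iUnion_homothety hKne hr hKc)))

end Homothety

theorem IsExtremal.mem_range_of_eq_iUnion_homothety {ι : Type*} {K : Set ℂ} {c : ι → ℂ}
    {r : ι → ℝ} (hK : IsCompact K) (hr : ∀ i, r i ∈ Ico 0 1)
    (hKc : K = ⋃ i, homothety (c i) (r i) '' K) {e : ℂ} (he : IsExtremal K e) : e ∈ range c := by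
  have heK := he.1
  rw [hKc] at heK
  obtain ⟨i, w, hw, rfl⟩ := mem_iUnion.1 heK
  refine ⟨i, ?_⟩
  by_cases hwc : w = c i
  · rw [hwc, homothety_apply_same]
  rcases (hr i).1.eq_or_lt with hr₀ | hr₀
  · rw [← hr₀, homothety_zero, AffineMap.const_apply]
  · refine absurd ⟨w, c i, hw, hK.center_mem_of_eq_iUnion_homothety ⟨w, hw⟩ hr hKc i, hwc, r i,
      hr₀, (hr i).2, ?_⟩ he.2
    rw [homothety_eq_lineMap, lineMap_apply_module, add_comm]

namespace IFS

variable {n : ℕ} {T : Fin n → ℂ → ℂ} {φ : Fin n → ℂ}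

@[simp]
theorem wordFactor_cons (k : Fin n) (x : List (Fin n)) :
    wordFactor φ (k :: x) = φ k * wordFactor φ x := by
  simp [wordFactor]

theorem wordFactor_ne_zero (hφ : ∀ k, φ k ≠ 0) (x : List (Fin n)) : wordFactor φ x ≠ 0 := by
  simpa [wordFactor, List.prod_ne_zero] using fun k _ => hφ k

theorem norm_wordFactor_le_one (hφ : ∀ k, ‖φ k‖ < 1) (x : List (Fin n)) :
    ‖wordFactor φ x‖ ≤ 1 := by
  induction x with
  | nil => simp [wordFactor]
  | cons k x ih =>
    rw [wordFactor_cons, norm_mul]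
    exact mul_le_one₀ (hφ k).le (norm_nonneg _) ih

theorem norm_wordFactor_lt_one (hφ : ∀ k, ‖φ k‖ < 1) {x : List (Fin n)} (hx : x ≠ []) :
    ‖wordFactor φ x‖ < 1 := by
  obtain ⟨k, x, rfl⟩ := List.exists_cons_of_ne_nil hx
  rw [wordFactor_cons, norm_mul]
  exact mul_lt_one_of_nonneg_of_lt_one_left (norm_nonneg _) (hφ k) (norm_wordFactor_le_one hφ x)

theorem wordFactor_eq_norm_mul_pow {E : ℂ} (hφ : ∀ k, φ k = ‖φ k‖ * E) (x : List (Fin n)) :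
    wordFactor φ x = ‖wordFactor φ x‖ * E ^ x.length := by
  induction x with
  | nil => simp [wordFactor]
  | cons k x ih =>
    rw [wordFactor_cons, norm_mul, ofReal_mul, List.length_cons]
    conv_lhs => rw [hφ k, ih]
    ring

theorem wordMap_sub_wordMap (hT : ∀ k z w, T k z - T k w = φ k * (z - w)) (x : List (Fin n))
    (z w : ℂ) : wordMap T x z - wordMap T x w = wordFactor φ x * (z - w) := by
  induction x with
  | nil => simp [wordMap, wordFactor]
  | cons k x ih => rw [wordMap, comp_apply, comp_apply, hT, ih, wordFactor_cons, mul_assoc]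

theorem wordMap_eq_homothety (hT : ∀ k z w, T k z - T k w = φ k * (z - w)) {x : List (Fin n)}
    {q : ℂ} (hq : IsFixedPt (wordMap T x) q) {r : ℝ} (hr : wordFactor φ x = r) :
    wordMap T x = homothety q r := by
  ext z
  have h := wordMap_sub_wordMap hT x z q
  rw [hq.eq, hr] at h
  rw [homothety_apply, vsub_eq_sub, vadd_eq_add, real_smul]
  linear_combination h

variable {F : Set ℂ}

theorem eq_iUnion_wordMap_image (hF : F = ⋃ k, T k '' F) (L : ℕ) :
    F = ⋃ x : {x : List (Fin n) // x.length = L}, wordMap T x.1 '' F := by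
  induction L with
  | zero => ext z; simp [List.length_eq_zero_iff, wordMap]
  | succ L ih =>
    calc F = ⋃ k, T k '' F := hF
      _ = ⋃ k, T k '' ⋃ x : {x : List (Fin n) // x.length = L}, wordMap T x.1 '' F := by
        rw [← ih]
      _ = _ := by
        ext z
        simp only [image_iUnion, mem_iUnion, mem_image, Subtype.exists, exists_prop]
        constructor
        · rintro ⟨k, x, hx, _, ⟨w, hw, rfl⟩, rfl⟩
          exact ⟨k :: x, by simp [hx], w, hw, rfl⟩
        · rintro ⟨_ | ⟨k, x⟩, hx, w, hw, rfl⟩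
          · simp at hx
          · exact ⟨k, x, by simpa using hx, _, ⟨w, hw, rfl⟩, rfl⟩

end IFS

theorem equiangular_convex_hull_general {n : ℕ} (p φ : Fin n → ℂ)
    (hφ : ∀ k, 0 < ‖φ k‖ ∧ ‖φ k‖ < 1)
    (T : Fin n → ℂ → ℂ) (hT : ∀ k z, T k z = p k + φ k * (z - p k))
    (F : Set ℂ) (hFne : F.Nonempty) (hFc : IsCompact F)
    (hFinv : F = ⋃ k, T k '' F)
    (M : ℕ) (hM : 1 ≤ M) (N : ℕ)
    (hunity : ∀ k, φ k = (‖φ k‖ : ℂ) *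
      Complex.exp ((((2 * Real.pi * (N : ℝ)) / (M : ℝ) : ℝ) : ℂ) * Complex.I))
    (pp : List (Fin n) → ℂ) (hpp : ∀ x, x ≠ [] → wordMap T x (pp x) = pp x) :
    (∀ x : List (Fin n), x.length = M / Nat.gcd N M →
      ∃ r : ℝ, 0 < r ∧ wordFactor φ x = (r : ℂ)) ∧
    (F = ⋃ x : {x : List (Fin n) // x.length = M / Nat.gcd N M},
      wordMap T x.1 '' F) ∧
    (convexHull ℝ F =
      convexHull ℝ {z : ℂ | ∃ x : List (Fin n), x.length = M / Nat.gcd N M ∧ z = pp x}) ∧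
    (∀ e, IsExtremal F e →
      ∃ x : List (Fin n), x.length = M / Nat.gcd N M ∧ e = pp x) := by
  set L := M / Nat.gcd N M
  set S := {z : ℂ | ∃ x : List (Fin n), x.length = L ∧ z = pp x}
  have hT' : ∀ k z w, T k z - T k w = φ k * (z - w) := fun k z w => by rw [hT, hT]; ring
  have hne : ∀ x : List (Fin n), x.length = L → x ≠ [] := by
    rintro x hx rfl
    exact (Nat.div_pos (Nat.gcd_le_right _ hM) (Nat.gcd_pos_of_pos_right N hM)).ne hx
  have hfactor : ∀ x : List (Fin n), x.length = L →
      ‖wordFactor φ x‖ ∈ Ioo 0 1 ∧ wordFactor φ x = ‖wordFactor φ x‖ := by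
    intro x hx
    refine ⟨⟨norm_pos_iff.2 (IFS.wordFactor_ne_zero (fun k => norm_pos_iff.1 (hφ k).1) x),
      IFS.norm_wordFactor_lt_one (fun k => (hφ k).2) (hne x hx)⟩, ?_⟩
    conv_lhs => rw [IFS.wordFactor_eq_norm_mul_pow hunity x, hx, exp_two_pi_div_mul_I_pow_div_gcd]
    exact mul_one _
  have hhom : ∀ x : List (Fin n), x.length = L →
      wordMap T x = homothety (pp x) ‖wordFactor φ x‖ :=
    fun x hx => IFS.wordMap_eq_homothety hT' (hpp x (hne x hx)) (hfactor x hx).2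
  have hF := IFS.eq_iUnion_wordMap_image hFinv L
  have hFhom : F = ⋃ x : {x : List (Fin n) // x.length = L},
      homothety (pp x.1) ‖wordFactor φ x.1‖ '' F :=
    hF.trans (iUnion_congr fun x => by rw [hhom x.1 x.2])
  have : Finite {x : List (Fin n) // x.length = L} := (List.finite_length_eq (Fin n) L).to_subtype
  have hS : S = range fun x : {x : List (Fin n) // x.length = L} => pp x.1 := by
    ext z; simp [S, eq_comm]
  have hratio := fun x : {x : List (Fin n) // x.length = L} =>
    Ioo_subset_Ico_self (hfactor x.1 x.2).1
  refine ⟨fun x hx => ⟨_, (hfactor x hx).1.1, (hfactor x hx).2⟩, hF,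
    hS ▸ hFc.convexHull_eq_of_eq_iUnion_homothety hFne hratio hFhom, fun e he => ?_⟩
  obtain ⟨x, rfl⟩ := he.mem_range_of_eq_iUnion_homothety hFc hratio hFhom
  exact ⟨x.1, x.2, rfl⟩

/-- equiangular fractals of unity: if all rotation angles equal `2πN/M`, and
`M' := M / gcd(N,M)`, then every length-`M'` word has positive real factor `φ_x`, `F` is
invariant under (hence the attractor of) the IFS of all compositions `T_x` with
`|x| = M'`, and `conv F = conv {p_x : |x| = M'}`; in particular every extremal point of
`F` is some `p_x` with `|x| = M'`. -/
theorem equiangular_convex_hull {n : ℕ} (hn : 1 ≤ n) (p φ : Fin n → ℂ)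
    (hφ : ∀ k, 0 < ‖φ k‖ ∧ ‖φ k‖ < 1)
    (T : Fin n → ℂ → ℂ) (hT : ∀ k z, T k z = p k + φ k * (z - p k))
    (F : Set ℂ) (hFne : F.Nonempty) (hFc : IsCompact F)
    (hFinv : F = ⋃ k, T k '' F)
    (M : ℕ) (hM : 1 ≤ M) (N : ℕ) (hN : N < M)
    (hunity : ∀ k, φ k = (‖φ k‖ : ℂ) *
      Complex.exp ((((2 * Real.pi * (N : ℝ)) / (M : ℝ) : ℝ) : ℂ) * Complex.I))
    (pp : List (Fin n) → ℂ) (hpp : ∀ x, x ≠ [] → wordMap T x (pp x) = pp x) :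
    (∀ x : List (Fin n), x.length = M / Nat.gcd N M →
      ∃ r : ℝ, 0 < r ∧ wordFactor φ x = (r : ℂ)) ∧
    (F = ⋃ x : {x : List (Fin n) // x.length = M / Nat.gcd N M},
      wordMap T x.1 '' F) ∧
    (convexHull ℝ F =
      convexHull ℝ {z : ℂ | ∃ x : List (Fin n), x.length = M / Nat.gcd N M ∧ z = pp x}) ∧
    (∀ e, IsExtremal F e →
      ∃ x : List (Fin n), x.length = M / Nat.gcd N M ∧ e = pp x) :=
  equiangular_convex_hull_general p φ hφ T hT F hFne hFc hFinv M hM N hunity pp hpp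
end
end
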